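/- For every density matrix ρ on ℂ^d, M_Re(ρ) ≥ 0, and M_Re(ρ) = 0 if and only if ρ = ρ*, i.e. if and only if ρ is real. -/

import Mathlib

open Matrix Complex ComplexOrder Classical

/-- The positive semidefinite square root of a matrix (junk value `0` if not PSD). -/
noncomputable def psqrt {n : Type*} [Fintype n] [DecidableEq n] (A : Matrix n n ℂ) :
    Matrix n n ℂ :=
  if h : A.PosSemidef then
    (h.1.eigenvectorUnitary : Matrix n n ℂ) * diagonal ((↑) ∘ (√·) ∘ h.1.eigenvalues) *
      (star h.1.eigenvectorUnitary : Matrix n n ℂ)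
  else 0

/-- Entrywise complex conjugate of a matrix. -/
def mconj {m n : Type*} (A : Matrix m n ℂ) : Matrix m n ℂ := A.map (starRingEnd ℂ)

/-- Fidelity `F(ρ,σ) = Tr √(√ρ σ √ρ)`. -/
noncomputable def fidelity {n : Type*} [Fintype n] [DecidableEq n] (ρ σ : Matrix n n ℂ) : ℝ :=
  ((psqrt (psqrt ρ * σ * psqrt ρ)).trace).re

/-- The real part state `Re(ρ) = (ρ + ρ*)/2`. -/
noncomputable def reState {n : Type*} (ρ : Matrix n n ℂ) : Matrix n n ℂ :=
  ((1 : ℂ)/2) • (ρ + mconj ρ)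

/-- The imaginarity measure `M_Re(ρ) = 1 - F(ρ, Re(ρ))`. -/
noncomputable def MRe {n : Type*} [Fintype n] [DecidableEq n] (ρ : Matrix n n ℂ) : ℝ :=
  1 - fidelity ρ (reState ρ)

/-- A density matrix: positive semidefinite with trace 1. -/
def IsDensityMatrix {n : Type*} [Fintype n] (ρ : Matrix n n ℂ) : Prop :=
  ρ.PosSemidef ∧ ρ.trace = 1


/-!
Diagonalise `ρ = U diag(w) U*`; fidelity is invariant under unitary conjugation, so with
`τ = U* σ U` and `N = √(√w τ √w)` we have `F(ρ, σ) = Re Tr N` and `(N²)ⱼⱼ = wⱼ τⱼⱼ`.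
Column by column, Cauchy–Schwarz and AM–GM give
`Re Nⱼⱼ ≤ ‖N·ⱼ‖ = √(wⱼ τⱼⱼ) ≤ (wⱼ + τⱼⱼ) / 2`, so `2 F(ρ, σ) ≤ Tr ρ + Tr σ`.
Equality forces `N = diag(w)` and `τⱼⱼ = wⱼ`, hence `τ = diag(w)`, i.e. `σ = ρ`.
Since `Re(ρ)` is again a density matrix, `M_Re(ρ) ≥ 0` with equality iff `Re(ρ) = ρ`.
-/

open ComplexConjugate

section Column

open Finset

variable {n : Type*} [Fintype n] {v : n → ℂ} {a b : ℝ}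

lemma sq_re_le_sum_normSq (v : n → ℂ) (j : n) : (v j).re ^ 2 ≤ ∑ i, normSq (v i) :=
  calc (v j).re ^ 2 ≤ normSq (v j) := by rw [sq]; exact Complex.re_sq_le_normSq (v j)
    _ ≤ ∑ i, normSq (v i) := single_le_sum (fun i _ => normSq_nonneg (v i)) (mem_univ j)

lemma two_mul_re_le_add_of_sum_normSq_eq (ha : 0 ≤ a) (hb : 0 ≤ b)
    (hv : ∑ i, normSq (v i) = a * b) (j : n) : 2 * (v j).re ≤ a + b := by
  nlinarith [sq_re_le_sum_normSq v j, sq_nonneg (a - b)]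

lemma eq_pi_single_of_two_mul_re_eq_add [DecidableEq n] (hv : ∑ i, normSq (v i) = a * b)
    {j : n} (hj : 2 * (v j).re = a + b) : b = a ∧ v = Pi.single j (a : ℂ) := by
  have hsq : (a - b) ^ 2 = 0 := by
    have hre := sq_re_le_sum_normSq v j
    rw [hv, show (v j).re = (a + b) / 2 by linarith] at hre
    nlinarith [sq_nonneg (a - b)]
  have hba : b = a := by linarith [pow_eq_zero_iff two_ne_zero |>.mp hsq]
  subst hba
  have hvj : (v j).re = b := by linarith
  have hrest : (v j).im ^ 2 + ∑ i ∈ univ.erase j, normSq (v i) = 0 := by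
    rw [← add_sum_erase _ _ (mem_univ j), normSq_apply, hvj] at hv
    linarith
  have hrest_nonneg := sum_nonneg fun i (_ : i ∈ univ.erase j) => normSq_nonneg (v i)
  refine ⟨rfl, funext fun i => ?_⟩
  rcases eq_or_ne i j with rfl | hij
  · have him : (v i).im = 0 := by nlinarith
    simp [Complex.ext_iff, hvj, him]
  · have hsum : ∑ i ∈ univ.erase j, normSq (v i) = 0 := by nlinarith [sq_nonneg (v j).im]
    rw [sum_eq_zero_iff_of_nonneg fun i _ => normSq_nonneg (v i)] at hsum
    simpa [hij] using hsum i (mem_erase.mpr ⟨hij, mem_univ i⟩)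

end Column

namespace Matrix

section Entries

variable {n : Type*} [Fintype n] {A N : Matrix n n ℂ}

lemma IsHermitian.sum_normSq_apply (hN : N.IsHermitian) (j : n) :
    ∑ i, normSq (N i j) = ((N * N) j j).re := by
  rw [mul_apply, Complex.re_sum]
  refine Finset.sum_congr rfl fun i _ => ?_
  rw [← hN.apply j i, Complex.star_def, ← Complex.normSq_eq_conj_mul_self, Complex.ofReal_re]

lemma PosSemidef.apply_eq_zero_of_diag_eq_zero [DecidableEq n] (hA : A.PosSemidef) {j : n}
    (hj : A j j = 0) (i : n) : A i j = 0 := by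
  have hcol : A *ᵥ Pi.single j 1 = 0 :=
    (hA.dotProduct_mulVec_zero_iff _).mp (by simpa [mulVec_single_one] using hj)
  simpa [mulVec_single_one] using congrFun hcol i

lemma PosSemidef.star_conj (hA : A.PosSemidef) (U : Matrix n n ℂ) :
    (star U * A * U).PosSemidef := by
  simpa [star_eq_conjTranspose] using hA.conjTranspose_mul_mul_same U

end Entries

variable {n : Type*} [Fintype n] [DecidableEq n]

section Psqrt
open scoped MatrixOrder

lemma psqrt_eq_cfcSqrt {A : Matrix n n ℂ} (h : A.PosSemidef) : psqrt A = CFC.sqrt A := by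
  rw [CFC.sqrt_eq_real_sqrt A h.nonneg, cfcₙ_eq_cfc, h.1.cfc_eq, IsHermitian.cfc,
    Unitary.conjStarAlgAut_apply, psqrt, dif_pos h]
  rfl

lemma PosSemidef.psqrt {A : Matrix n n ℂ} (h : A.PosSemidef) : (psqrt A).PosSemidef := by
  rw [psqrt_eq_cfcSqrt h]
  exact (CFC.sqrt_nonneg A).posSemidef

lemma psqrt_mul_self {A : Matrix n n ℂ} (h : A.PosSemidef) : psqrt A * psqrt A = A := by
  rw [psqrt_eq_cfcSqrt h]
  exact CFC.sqrt_mul_sqrt_self A h.nonneg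

lemma psqrt_eq_of_mul_self_eq {A B : Matrix n n ℂ} (hB : B.PosSemidef) (h : B * B = A) :
    psqrt A = B := by
  have hA : A.PosSemidef := by simpa [hB.1.eq, h] using posSemidef_conjTranspose_mul_self B
  rw [psqrt_eq_cfcSqrt hA]
  exact CFC.sqrt_unique h hB.nonneg

end Psqrt

section Unitary

variable {U : Matrix n n ℂ}

lemma psqrt_unitary_conj (hU : U ∈ unitary (Matrix n n ℂ)) (A : Matrix n n ℂ) :
    psqrt (U * A * star U) = U * psqrt A * star U := by
  have hconj : ∀ B : Matrix n n ℂ, (U * B * star U).PosSemidef ↔ B.PosSemidef :=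
    fun _ => (Unitary.isUnit_coe (U := ⟨U, hU⟩)).posSemidef_star_right_conjugate_iff
  by_cases hA : A.PosSemidef
  · refine psqrt_eq_of_mul_self_eq ((hconj _).mpr hA.psqrt) ?_
    calc _ = U * (psqrt A * (star U * U) * psqrt A) * star U := by simp only [mul_assoc]
      _ = _ := by rw [Unitary.star_mul_self_of_mem hU, mul_one, psqrt_mul_self hA]
  · simp [psqrt, hA, hconj]

lemma trace_unitary_conj (hU : U ∈ unitary (Matrix n n ℂ)) (A : Matrix n n ℂ) :
    (U * A * star U).trace = A.trace := by
  rw [trace_mul_cycle, Unitary.star_mul_self_of_mem hU, one_mul]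

lemma eq_unitary_conj_star_conj (hU : U ∈ unitary (Matrix n n ℂ)) (A : Matrix n n ℂ) :
    A = U * (star U * A * U) * star U := by
  simp only [← mul_assoc, Unitary.mul_star_self_of_mem hU, one_mul]
  rw [mul_assoc, Unitary.mul_star_self_of_mem hU, mul_one]

lemma fidelity_unitary_conj (hU : U ∈ unitary (Matrix n n ℂ)) (ρ σ : Matrix n n ℂ) :
    fidelity (U * ρ * star U) (U * σ * star U) = fidelity ρ σ := by
  have hUU := Unitary.star_mul_self_of_mem hU
  have hconj : U * psqrt ρ * star U * (U * σ * star U) * (U * psqrt ρ * star U) =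
      U * (psqrt ρ * σ * psqrt ρ) * star U := by
    simp only [mul_assoc, ← mul_assoc (star U) U, hUU, one_mul]
  rw [fidelity, fidelity, psqrt_unitary_conj hU, hconj, psqrt_unitary_conj hU,
    trace_unitary_conj hU]

end Unitary

lemma fidelity_self {ρ : Matrix n n ℂ} (hρ : ρ.PosSemidef) : fidelity ρ ρ = ρ.trace.re := by
  have hsq : psqrt ρ * ρ * psqrt ρ = ρ * ρ := by
    nth_rewrite 2 [← psqrt_mul_self hρ]
    rw [mul_assoc, mul_assoc, ← mul_assoc, psqrt_mul_self hρ]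
  rw [fidelity, hsq, psqrt_eq_of_mul_self_eq hρ rfl]

lemma PosSemidef.exists_eq_unitary_conj_diagonal {ρ : Matrix n n ℂ} (hρ : ρ.PosSemidef) :
    ∃ U ∈ unitary (Matrix n n ℂ), ∃ w : n → ℝ, 0 ≤ w ∧
      ρ = U * (diagonal fun i => (w i : ℂ)) * star U :=
  ⟨_, hρ.1.eigenvectorUnitary.2, _, hρ.eigenvalues_nonneg, hρ.1.spectral_theorem⟩

section Diagonal

variable {w : n → ℝ} {τ N : Matrix n n ℂ}

local notation "√D" => diagonal fun i => ((√(w i) : ℝ) : ℂ)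

lemma psqrt_diagonal (hw : 0 ≤ w) : psqrt (diagonal fun i => (w i : ℂ)) = √D := by
  refine psqrt_eq_of_mul_self_eq (PosSemidef.diagonal fun i => ?_) ?_
  · exact Complex.zero_le_real.mpr (Real.sqrt_nonneg _)
  · rw [diagonal_mul_diagonal]
    congr! 2 with i
    rw [← Complex.ofReal_mul, Real.mul_self_sqrt (hw i)]

lemma sum_normSq_apply_of_mul_self_eq (hw : 0 ≤ w) (hN : N.IsHermitian)
    (hNN : N * N = √D * τ * √D) (j : n) : ∑ i, normSq (N i j) = w j * (τ j j).re := by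
  rw [hN.sum_normSq_apply, hNN, mul_diagonal, diagonal_mul, mul_right_comm, ← Complex.ofReal_mul,
    Real.mul_self_sqrt (hw j), Complex.re_ofReal_mul]

lemma two_mul_re_diag_le (hw : 0 ≤ w) (hτ : τ.PosSemidef) (hN : N.IsHermitian)
    (hNN : N * N = √D * τ * √D) (j : n) : 2 * (N j j).re ≤ w j + (τ j j).re :=
  two_mul_re_le_add_of_sum_normSq_eq (hw j) (Complex.le_def.mp hτ.diag_nonneg).1
    (sum_normSq_apply_of_mul_self_eq hw hN hNN j) j

lemma two_mul_re_trace_le (hw : 0 ≤ w) (hτ : τ.PosSemidef) (hN : N.IsHermitian)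
    (hNN : N * N = √D * τ * √D) : 2 * N.trace.re ≤ ∑ i, w i + τ.trace.re := by
  simp only [trace, diag, Complex.re_sum, Finset.mul_sum, ← Finset.sum_add_distrib]
  exact Finset.sum_le_sum fun j _ => two_mul_re_diag_le hw hτ hN hNN j

lemma PosSemidef.eq_diagonal_of_sqrt_diagonal_conj (hw : 0 ≤ w) (hτ : τ.PosSemidef)
    (hdiag : ∀ j, (τ j j).re = w j) (hoff : ∀ i j, i ≠ j → (√D * τ * √D) i j = 0) :
    τ = diagonal fun i => (w i : ℂ) := by
  have hdiag' : ∀ j, τ j j = w j := fun j => by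
    rw [← hτ.1.coe_re_apply_self j, RCLike.re_to_complex, hdiag j]
    rfl
  ext i j
  rcases eq_or_ne i j with rfl | hij
  · simp [hdiag']
  have hij' := hoff i j hij
  rw [mul_diagonal, diagonal_mul] at hij'
  rw [diagonal_apply_ne _ hij]
  rcases mul_eq_zero.mp hij' with hi | hj
  · rcases mul_eq_zero.mp hi with hi | hij
    · have hwi : w i = 0 := by simpa [Real.sqrt_eq_zero (hw i)] using hi
      rw [← hτ.1.apply, hτ.apply_eq_zero_of_diag_eq_zero (by simp [hdiag', hwi]) j, star_zero]
    · exact hij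
  · have hwj : w j = 0 := by simpa [Real.sqrt_eq_zero (hw j)] using hj
    exact hτ.apply_eq_zero_of_diag_eq_zero (by simp [hdiag', hwj]) i

lemma eq_diagonal_of_two_mul_re_trace_eq (hw : 0 ≤ w) (hτ : τ.PosSemidef) (hN : N.IsHermitian)
    (hNN : N * N = √D * τ * √D) (h : 2 * N.trace.re = ∑ i, w i + τ.trace.re) :
    τ = diagonal fun i => (w i : ℂ) := by
  simp only [trace, diag, Complex.re_sum, Finset.mul_sum, ← Finset.sum_add_distrib] at h
  have hcol j := eq_pi_single_of_two_mul_re_eq_add (v := fun i => N i j)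
    (sum_normSq_apply_of_mul_self_eq hw hN hNN j)
    ((Finset.sum_eq_sum_iff_of_le fun j _ => two_mul_re_diag_le hw hτ hN hNN j).mp h j
      (Finset.mem_univ j))
  have hNdiag : N = diagonal fun i => (w i : ℂ) := by
    ext i j
    rw [congrFun (hcol j).2 i, diagonal_apply, Pi.single_apply]
    rcases eq_or_ne i j with rfl | hij <;> simp [*]
  refine hτ.eq_diagonal_of_sqrt_diagonal_conj hw (fun j => (hcol j).1) fun i j hij => ?_
  rw [← hNN, hNdiag, diagonal_mul_diagonal, diagonal_apply_ne _ hij]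

lemma PosSemidef.sqrt_diagonal_conj (hτ : τ.PosSemidef) : (√D * τ * √D).PosSemidef := by
  simpa [diagonal_conjTranspose, Pi.star_def] using hτ.conjTranspose_mul_mul_same √D

lemma two_mul_fidelity_diagonal_le (hw : 0 ≤ w) (hτ : τ.PosSemidef) :
    2 * fidelity (diagonal fun i => (w i : ℂ)) τ ≤ ∑ i, w i + τ.trace.re := by
  have hM := hτ.sqrt_diagonal_conj (w := w)
  rw [fidelity, psqrt_diagonal hw]
  exact two_mul_re_trace_le hw hτ hM.psqrt.1 (psqrt_mul_self hM)

lemma eq_diagonal_of_two_mul_fidelity_eq (hw : 0 ≤ w) (hτ : τ.PosSemidef)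
    (h : 2 * fidelity (diagonal fun i => (w i : ℂ)) τ = ∑ i, w i + τ.trace.re) :
    τ = diagonal fun i => (w i : ℂ) := by
  have hM := hτ.sqrt_diagonal_conj (w := w)
  rw [fidelity, psqrt_diagonal hw] at h
  exact eq_diagonal_of_two_mul_re_trace_eq hw hτ hM.psqrt.1 (psqrt_mul_self hM) h

end Diagonal

section Fidelity

variable {ρ σ : Matrix n n ℂ}

theorem two_mul_fidelity_le (hρ : ρ.PosSemidef) (hσ : σ.PosSemidef) :
    2 * fidelity ρ σ ≤ ρ.trace.re + σ.trace.re := by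
  obtain ⟨U, hU, w, hw, rfl⟩ := hρ.exists_eq_unitary_conj_diagonal
  rw [eq_unitary_conj_star_conj hU σ, fidelity_unitary_conj hU, trace_unitary_conj hU,
    trace_unitary_conj hU, trace_diagonal, Complex.re_sum]
  exact two_mul_fidelity_diagonal_le hw (hσ.star_conj U)

theorem eq_of_two_mul_fidelity_eq (hρ : ρ.PosSemidef) (hσ : σ.PosSemidef)
    (h : 2 * fidelity ρ σ = ρ.trace.re + σ.trace.re) : ρ = σ := by
  obtain ⟨U, hU, w, hw, rfl⟩ := hρ.exists_eq_unitary_conj_diagonal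
  rw [eq_unitary_conj_star_conj hU σ, fidelity_unitary_conj hU, trace_unitary_conj hU,
    trace_unitary_conj hU, trace_diagonal, Complex.re_sum] at h
  conv_rhs => rw [eq_unitary_conj_star_conj hU σ]
  rw [← eq_diagonal_of_two_mul_fidelity_eq hw (hσ.star_conj U) h]

end Fidelity

section RealPart

variable {m : Type*} {ρ : Matrix m m ℂ}

lemma IsHermitian.mconj_eq_transpose (hρ : ρ.IsHermitian) : mconj ρ = ρᵀ := by
  ext i j
  simp [mconj, ← hρ.apply i j]

lemma PosSemidef.reState [Fintype m] (hρ : ρ.PosSemidef) : (reState ρ).PosSemidef := by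
  rw [_root_.reState, hρ.1.mconj_eq_transpose]
  exact (hρ.add hρ.transpose).smul (Complex.le_def.mpr ⟨by norm_num, by norm_num⟩)

lemma trace_mconj [Fintype m] (A : Matrix m m ℂ) : (mconj A).trace = conj A.trace :=
  (map_sum (starRingEnd ℂ) _ _).symm

lemma trace_reState [Fintype m] (ρ : Matrix m m ℂ) : (reState ρ).trace = (ρ.trace.re : ℂ) := by
  rw [_root_.reState, trace_smul, trace_add, trace_mconj, Complex.add_conj, smul_eq_mul]
  push_cast
  ring

lemma eq_reState_iff : ρ = reState ρ ↔ ρ = mconj ρ := by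
  simp only [← Matrix.ext_iff, _root_.reState, mconj, smul_apply, add_apply, map_apply,
    smul_eq_mul]
  refine forall₂_congr fun i j => ⟨fun h => ?_, fun h => ?_⟩
  · linear_combination 2 * h
  · linear_combination h / 2

end RealPart

end Matrix

theorem stmt0 (d : ℕ) (ρ : Matrix (Fin d) (Fin d) ℂ) (hρ : IsDensityMatrix ρ) :
    0 ≤ MRe ρ ∧ (MRe ρ = 0 ↔ ρ = mconj ρ) := by
  obtain ⟨hρ, htr⟩ := hρ
  have hσ := hρ.reState
  have htr_re : ρ.trace.re = 1 := by simp [htr]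
  have htrσ_re : (reState ρ).trace.re = 1 := by simp [trace_reState, htr]
  have hle := two_mul_fidelity_le hρ hσ
  refine ⟨by rw [MRe]; linarith, fun h => ?_, fun h => ?_⟩
  · exact eq_reState_iff.mp (eq_of_two_mul_fidelity_eq hρ hσ (by rw [MRe] at h; linarith))
  · rw [MRe, ← eq_reState_iff.mpr h, fidelity_self hρ, htr_re, sub_self]
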